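/- arXiv:2209.05703 — 4 statements merged into one kernel-verified Lean document; each statement's English description precedes it below -/
import Mathlib

section
/- Let Π be a finite set of joint policies for N players, and suppose the game has the subjective ε-satisficing paths property within Π: from every joint policy π ∈ Π there is a finite sequence of joint policies in Π, each obtained from the previous by changing only the policies of players not subjectively ε-best-responding, ending at a subjective ε-equilibrium. Suppose each player, when not subjectively ε-best-responding, switches with probability e^i ∈ (0,1) to a uniformly random policy in Π^i (independently across players), and otherwise keeps its policy; players who are subjectively ε-best-responding never change policy. Then the induced Markov chain on Π converges: P(π_k is a subjective ε-equilibrium) → 1 as k → ∞. -/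
open Filter

/-- One-step transition kernel of the satisficing policy-update dynamics: each player who is
subjectively ε-best-responding keeps its policy; each other player independently keeps its
policy with probability `1 − e i` and otherwise switches to a uniformly random policy. -/
noncomputable def satisficingKernel {ι : Type} [Fintype ι] [DecidableEq ι] {P : ι → Type}
    [∀ i, Fintype (P i)] [∀ i, DecidableEq (P i)]
    (BR : ∀ i : ι, (∀ j, P j) → Prop) [∀ i π, Decidable (BR i π)]
    (e : ι → ℝ) (π π' : ∀ j, P j) : ℝ :=
  ∏ i : ι,
    if BR i π then (if π' i = π i then (1 : ℝ) else 0)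
    else ((1 - e i) * (if π' i = π i then (1 : ℝ) else 0)
          + e i * (1 / (Fintype.card (P i) : ℝ)))

/-- `k`-step transition probabilities. -/
noncomputable def kernelPow {P : Type} [Fintype P] [DecidableEq P] (K : P → P → ℝ) : ℕ → P → P → ℝ
  | 0 => fun p q => if p = q then 1 else 0
  | n + 1 => fun p q => ∑ r : P, K p r * kernelPow K n r q

/-
Proof idea: from every joint policy, the satisficing path to an equilibrium is followed with
positive probability, because only players that are not best-responding move and each of them
jumps to any given policy with probability at least `e i / |P i|`; equilibria are absorbing.
As there are finitely many joint policies, a single horizon `m` and a single `δ > 0` bound the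
probability of being absorbed within `m` steps from every start, so the probability of not yet
being absorbed decays like `(1 - δ) ^ (k / m)`.
-/

section KernelPow

variable {S : Type} [Fintype S] [DecidableEq S] {K : S → S → ℝ}

lemma kernelPow_nonneg (hK : ∀ p q, 0 ≤ K p q) (n : ℕ) (p q : S) : 0 ≤ kernelPow K n p q := by
  induction n generalizing p with
  | zero => unfold kernelPow; positivity
  | succ n ih => exact Finset.sum_nonneg fun r _ => mul_nonneg (hK p r) (ih r)

lemma sum_kernelPow_eq_one (hK : ∀ p, ∑ q, K p q = 1) (n : ℕ) (p : S) :
    ∑ q, kernelPow K n p q = 1 := by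
  induction n generalizing p with
  | zero => simp [kernelPow]
  | succ n ih =>
    simp only [kernelPow]
    rw [Finset.sum_comm]
    simp_rw [← Finset.mul_sum, ih, mul_one, hK]

lemma kernelPow_add (a b : ℕ) (p q : S) :
    kernelPow K (a + b) p q = ∑ r, kernelPow K a p r * kernelPow K b r q := by
  induction a generalizing p with
  | zero => simp [kernelPow]
  | succ a ih =>
    rw [Nat.add_right_comm]
    simp only [kernelPow, ih, Finset.mul_sum, Finset.sum_mul, mul_assoc]
    exact Finset.sum_comm

lemma kernelPow_pos_of_chain (hK : ∀ p q, 0 ≤ K p q) (n : ℕ) (path : ℕ → S)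
    (hpath : ∀ k < n, 0 < K (path k) (path (k + 1))) :
    0 < kernelPow K n (path 0) (path n) := by
  induction n generalizing path with
  | zero => simp [kernelPow]
  | succ n ih =>
    have htail := ih (fun k => path (k + 1)) fun k hk => hpath (k + 1) (by omega)
    calc 0 < K (path 0) (path 1) * kernelPow K n (path 1) (path (n + 1)) :=
          mul_pos (hpath 0 n.succ_pos) htail
      _ ≤ ∑ r, K (path 0) r * kernelPow K n r (path (n + 1)) :=
          Finset.single_le_sum (fun r _ => mul_nonneg (hK _ r) (kernelPow_nonneg hK n r _))
            (Finset.mem_univ _)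

lemma kernelPow_of_absorbing {a : S} (ha : ∀ q, K a q = if q = a then 1 else 0) (n : ℕ) (q : S) :
    kernelPow K n a q = if a = q then 1 else 0 := by
  induction n with
  | zero => rfl
  | succ n ih => simp [kernelPow, ha, ih]

end KernelPow

noncomputable def kernelPowMass {S : Type} [Fintype S] [DecidableEq S] (K : S → S → ℝ)
    (A : Finset S) (n : ℕ) (p : S) : ℝ :=
  ∑ a ∈ A, kernelPow K n p a

section Absorption

variable {S : Type} [Fintype S] [DecidableEq S] {K : S → S → ℝ} {A : Finset S}

lemma kernelPowMass_zero (p : S) : kernelPowMass K A 0 p = if p ∈ A then 1 else 0 := by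
  simp [kernelPowMass, kernelPow]

lemma kernelPowMass_add (m n : ℕ) (p : S) :
    kernelPowMass K A (m + n) p = ∑ r, kernelPow K m p r * kernelPowMass K A n r := by
  simp only [kernelPowMass, kernelPow_add, Finset.mul_sum]
  exact Finset.sum_comm

lemma one_sub_kernelPowMass_add (hK : ∀ p, ∑ q, K p q = 1) (m n : ℕ) (p : S) :
    1 - kernelPowMass K A (m + n) p = ∑ r, kernelPow K m p r * (1 - kernelPowMass K A n r) := by
  simp only [mul_sub, mul_one, Finset.sum_sub_distrib, sum_kernelPow_eq_one hK,
    kernelPowMass_add]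

lemma kernelPowMass_nonneg (hK : ∀ p q, 0 ≤ K p q) (n : ℕ) (p : S) : 0 ≤ kernelPowMass K A n p :=
  Finset.sum_nonneg fun r _ => kernelPow_nonneg hK n p r

lemma kernelPowMass_le_one (hK0 : ∀ p q, 0 ≤ K p q) (hK1 : ∀ p, ∑ q, K p q = 1) (n : ℕ) (p : S) :
    kernelPowMass K A n p ≤ 1 :=
  (Finset.sum_le_sum_of_subset_of_nonneg (Finset.subset_univ A)
    fun r _ _ => kernelPow_nonneg hK0 n p r).trans_eq (sum_kernelPow_eq_one hK1 n p)

lemma kernelPowMass_of_mem (hA : ∀ a ∈ A, ∀ q, K a q = if q = a then 1 else 0) {a : S}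
    (ha : a ∈ A) (n : ℕ) : kernelPowMass K A n a = 1 := by
  simp [kernelPowMass, kernelPow_of_absorbing (hA a ha), ha]

lemma kernelPowMass_pos_of_chain (hK : ∀ p q, 0 ≤ K p q) (n : ℕ) (path : ℕ → S)
    (hpath : ∀ k < n, 0 < K (path k) (path (k + 1))) (hn : path n ∈ A) :
    0 < kernelPowMass K A n (path 0) :=
  (kernelPow_pos_of_chain hK n path hpath).trans_le
    (Finset.single_le_sum (fun r _ => kernelPow_nonneg hK n _ r) hn)

variable (hK0 : ∀ p q, 0 ≤ K p q) (hK1 : ∀ p, ∑ q, K p q = 1)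
  (hA : ∀ a ∈ A, ∀ q, K a q = if q = a then 1 else 0)
include hK0 hK1 hA

-- To escape `A` for `k + l` steps the chain must escape it for `k` steps and then for `l` more
-- from where it is; the second factor vanishes on `A` and is at most `c` off `A`.
lemma one_sub_kernelPowMass_add_le {l : ℕ} {c : ℝ} (hc : ∀ r ∉ A, 1 - kernelPowMass K A l r ≤ c)
    (k : ℕ) (p : S) : 1 - kernelPowMass K A (k + l) p ≤ c * (1 - kernelPowMass K A k p) := by
  have hpoint : ∀ r, 1 - kernelPowMass K A l r ≤ c * (1 - kernelPowMass K A 0 r) := by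
    intro r
    by_cases hr : r ∈ A
    · simp [kernelPowMass_of_mem hA hr]
    · simpa [kernelPowMass_zero, hr] using hc r hr
  rw [one_sub_kernelPowMass_add hK1, ← add_zero k, one_sub_kernelPowMass_add hK1 k 0,
    add_zero, Finset.mul_sum]
  refine Finset.sum_le_sum fun r _ => ?_
  rw [mul_left_comm]
  exact mul_le_mul_of_nonneg_left (hpoint r) (kernelPow_nonneg hK0 k p r)

lemma kernelPowMass_monotone (p : S) : Monotone fun n => kernelPowMass K A n p := by
  refine monotone_nat_of_le_succ fun n => ?_
  have := one_sub_kernelPowMass_add_le hK0 hK1 hA (l := 1) (c := 1)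
    (fun r _ => by linarith [kernelPowMass_nonneg (A := A) hK0 1 r]) n p
  linarith

lemma one_sub_kernelPowMass_mul_le {m : ℕ} {δ : ℝ} (hδ : ∀ r, δ ≤ kernelPowMass K A m r)
    (j : ℕ) (p : S) : 1 - kernelPowMass K A (j * m) p ≤ (1 - δ) ^ j := by
  induction j with
  | zero => simpa using kernelPowMass_nonneg (A := A) hK0 0 p
  | succ j ih =>
    have hδ1 : 0 ≤ 1 - δ := by linarith [hδ p, kernelPowMass_le_one (A := A) hK0 hK1 m p]
    calc 1 - kernelPowMass K A ((j + 1) * m) p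
        ≤ (1 - δ) * (1 - kernelPowMass K A (j * m) p) := by
          rw [Nat.succ_mul]
          exact one_sub_kernelPowMass_add_le hK0 hK1 hA (fun r _ => by linarith [hδ r]) _ p
      _ ≤ (1 - δ) * (1 - δ) ^ j := mul_le_mul_of_nonneg_left ih hδ1
      _ = (1 - δ) ^ (j + 1) := (pow_succ' _ _).symm

lemma tendsto_kernelPowMass_of_uniform {m : ℕ} (hm : 0 < m) {δ : ℝ} (hδ0 : 0 < δ)
    (hδ : ∀ r, δ ≤ kernelPowMass K A m r) (p : S) :
    Tendsto (fun n => kernelPowMass K A n p) atTop (nhds 1) := by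
  have hgeom : Tendsto (fun n => 1 - (1 - δ) ^ (n / m)) atTop (nhds 1) := by
    have hδ1 : δ ≤ 1 := (hδ p).trans (kernelPowMass_le_one hK0 hK1 m p)
    simpa using tendsto_const_nhds.sub <|
      (tendsto_pow_atTop_nhds_zero_of_lt_one (r := 1 - δ) (by linarith) (by linarith)).comp
        (Nat.tendsto_div_const_atTop hm.ne')
  refine tendsto_of_tendsto_of_tendsto_of_le_of_le hgeom tendsto_const_nhds (fun n => ?_)
    fun n => kernelPowMass_le_one hK0 hK1 n p
  have hmono := kernelPowMass_monotone hK0 hK1 hA p (Nat.div_mul_le_self n m)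
  have hdecay := one_sub_kernelPowMass_mul_le hK0 hK1 hA hδ (n / m) p
  linarith

theorem tendsto_kernelPowMass_of_reachable (hreach : ∀ p, ∃ n, 0 < kernelPowMass K A n p)
    (p : S) : Tendsto (fun n => kernelPowMass K A n p) atTop (nhds 1) := by
  choose n hn using hreach
  set m := Finset.univ.sup n + 1
  have hpos : ∀ r, 0 < kernelPowMass K A m r := fun r =>
    (hn r).trans_le <| kernelPowMass_monotone hK0 hK1 hA r <|
      (Finset.le_sup (Finset.mem_univ r)).trans (Nat.le_succ _)
  exact tendsto_kernelPowMass_of_uniform hK0 hK1 hA (Nat.succ_pos _)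
    ((Finset.lt_inf'_iff ⟨p, Finset.mem_univ p⟩).2 fun r _ => hpos r)
    (fun r => Finset.inf'_le _ (Finset.mem_univ r)) p

end Absorption

section Satisficing

variable {ι : Type} [Fintype ι] [DecidableEq ι] {P : ι → Type}
  [∀ i, Fintype (P i)] [∀ i, DecidableEq (P i)]
  (BR : ι → (∀ j, P j) → Prop) [∀ i π, Decidable (BR i π)] (e : ι → ℝ)

lemma satisficingKernel_nonneg (he : ∀ i, e i ∈ Set.Icc (0 : ℝ) 1) (π π' : ∀ j, P j) :
    0 ≤ satisficingKernel BR e π π' := by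
  refine Finset.prod_nonneg fun i _ => ?_
  obtain ⟨he0, he1⟩ := he i
  split_ifs <;> positivity

lemma satisficingKernel_of_forall {π : ∀ j, P j} (hπ : ∀ i, BR i π) (π' : ∀ j, P j) :
    satisficingKernel BR e π π' = if π' = π then 1 else 0 := by
  by_cases h : π' = π
  · simp [satisficingKernel, hπ, h]
  · obtain ⟨i, hi⟩ := Function.ne_iff.mp h
    exact (Finset.prod_eq_zero (Finset.mem_univ i) (by simp [hπ i, hi])).trans (if_neg h).symm

variable [∀ i, Nonempty (P i)]

lemma sum_satisficingKernel (π : ∀ j, P j) : ∑ π', satisficingKernel BR e π π' = 1 := by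
  unfold satisficingKernel
  rw [← Fintype.prod_sum (fun i (x : P i) => if BR i π then (if x = π i then (1 : ℝ) else 0)
    else (1 - e i) * (if x = π i then (1 : ℝ) else 0) + e i * (1 / (Fintype.card (P i) : ℝ)))]
  refine Finset.prod_eq_one fun i _ => ?_
  have hcard : (Fintype.card (P i) : ℝ) ≠ 0 := by positivity
  split_ifs
  · simp
  · simp only [mul_ite, mul_one, mul_zero, one_div, Finset.sum_add_distrib, Finset.sum_ite_eq',
      Finset.mem_univ, ↓reduceIte, Finset.sum_const, Finset.card_univ, nsmul_eq_mul]
    field_simp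
    ring

lemma satisficingKernel_pos (he : ∀ i, e i ∈ Set.Ioc (0 : ℝ) 1) {π π' : ∀ j, P j}
    (h : ∀ i, BR i π → π' i = π i) : 0 < satisficingKernel BR e π π' := by
  refine Finset.prod_pos fun i _ => ?_
  obtain ⟨he0, he1⟩ := he i
  by_cases hi : BR i π
  · simp [hi, h i hi]
  · simp only [hi, if_false]
    split_ifs <;> positivity

end Satisficing

/-- If the game has the subjective ε-satisficing paths property within the finite joint policy
set, then the Markov chain induced by the satisficing dynamics (unsatisfied players switch with
probability `e^i ∈ (0,1)` to a uniformly random policy, satisfied players never switch) is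
absorbed in the set of subjective ε-equilibria with probability tending to 1. -/
theorem satisficing_dynamics_converge
    {ι : Type} [Fintype ι] [DecidableEq ι] {P : ι → Type}
    [∀ i, Fintype (P i)] [∀ i, DecidableEq (P i)] [∀ i, Nonempty (P i)]
    (BR : ∀ i : ι, (∀ j, P j) → Prop) [∀ i π, Decidable (BR i π)]
    (e : ι → ℝ) (he : ∀ i, e i ∈ Set.Ioo (0 : ℝ) 1)
    (hpaths : ∀ π : ∀ j, P j, ∃ (n : ℕ) (path : ℕ → ∀ j, P j),
      path 0 = π ∧ (∀ i, BR i (path n)) ∧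
      ∀ k, k < n → ∀ i, BR i (path k) → path (k + 1) i = path k i) :
    ∀ π₀ : ∀ j, P j,
      Tendsto
        (fun k => ∑ π' ∈ Finset.univ.filter (fun π' : ∀ j, P j => ∀ i, BR i π'),
          kernelPow (satisficingKernel BR e) k π₀ π')
        atTop (nhds 1) := by
  have hK0 := satisficingKernel_nonneg BR e fun i => Set.Ioo_subset_Icc_self (he i)
  refine tendsto_kernelPowMass_of_reachable hK0 (sum_satisficingKernel BR e)
    (fun π hπ => satisficingKernel_of_forall BR e (Finset.mem_filter.1 hπ).2) fun π => ?_
  obtain ⟨n, path, rfl, hend, hstep⟩ := hpaths π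
  refine ⟨n, kernelPowMass_pos_of_chain hK0 n path (fun k hk => ?_) (by simpa using hend)⟩
  exact satisficingKernel_pos BR e (fun i => Set.Ioo_subset_Ioc_self (he i)) (hstep k hk)
end

section
/- Satisficing-paths property via symmetry: Let N players each have the same finite policy set Π^0 (so Π = (Π^0)^N), and suppose the subjective best-response predicate is symmetric in the sense: if at a joint policy π two players i and j use the same individual policy, then player i is subjectively ε-best-responding at π if and only if player j is. Suppose further that there exists a symmetric subjective ε-equilibrium π* ∈ Π (all players using the same individual policy, with each subjectively ε-best-responding). Then from every π ∈ Π there exists a subjective ε-satisficing path of finite length within Π terminating at a subjective ε-equilibrium. -/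
/-!
Fix a policy `p` and call the players using it the cohort. If some player outside the cohort is
unsatisfied, it may switch to `p`. Otherwise some cohort member is unsatisfied, so by symmetry the
whole cohort is, and it may jointly switch to the policy `q` of an outsider; the players using `q`
then include the old cohort and that outsider. Either way the cohort grows, until it contains
every player; a joint policy in which everybody plays the same policy is either an equilibrium or
has nobody satisfied, and then one more step reaches the symmetric equilibrium.
-/

namespace SatisficingPath

open Finset

variable {ι P0 : Type} (BR : ι → (ι → P0) → Prop)

def IsEquilibrium (π : ι → P0) : Prop := ∀ i, BR i π

def IsSatisficingStep (π π' : ι → P0) : Prop := ∀ i, BR i π → π' i = π i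

def ReachesEquilibrium (π : ι → P0) : Prop :=
  ∃ (n : ℕ) (path : ℕ → ι → P0), path 0 = π ∧ IsEquilibrium BR (path n) ∧
    ∀ k < n, IsSatisficingStep BR (path k) (path (k + 1))

variable {BR}

theorem IsEquilibrium.reachesEquilibrium {π : ι → P0} (h : IsEquilibrium BR π) :
    ReachesEquilibrium BR π :=
  ⟨0, fun _ => π, rfl, h, fun _ hk => absurd hk (Nat.not_lt_zero _)⟩

theorem ReachesEquilibrium.of_isSatisficingStep {π π' : ι → P0}
    (hstep : IsSatisficingStep BR π π') (h : ReachesEquilibrium BR π') :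
    ReachesEquilibrium BR π := by
  obtain ⟨n, path, h0, hend, hpath⟩ := h
  refine ⟨n + 1, fun k => if k = 0 then π else path (k - 1), by simp, by simpa using hend, ?_⟩
  rintro (_ | k) hk
  · simpa [h0] using hstep
  · simpa using hpath k (by omega)

theorem isSatisficingStep_of_forall_not {π : ι → P0} (hnone : ∀ i, ¬BR i π) (π' : ι → P0) :
    IsSatisficingStep BR π π' :=
  fun i hi => absurd hi (hnone i)

theorem reachesEquilibrium_const
    (hsym : ∀ (π : ι → P0) (i j : ι), π i = π j → (BR i π ↔ BR j π))
    (hstar : ∃ p : P0, ∀ i, BR i (fun _ => p)) (p : P0) :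
    ReachesEquilibrium BR (fun _ => p) := by
  by_cases heq : IsEquilibrium BR fun _ : ι => p
  · exact heq.reachesEquilibrium
  obtain ⟨j, hj⟩ := not_forall.mp heq
  obtain ⟨pstar, hpstar⟩ := hstar
  have hnone : ∀ i, ¬BR i fun _ => p := fun i hi => hj ((hsym _ i j rfl).mp hi)
  exact (IsEquilibrium.reachesEquilibrium hpstar).of_isSatisficingStep
    (isSatisficingStep_of_forall_not hnone _)

theorem card_filter_ne_lt [Fintype ι] [DecidableEq ι] [DecidableEq P0]
    {π π' : ι → P0} {p q : P0} {j : ι}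
    (hcohort : ∀ i, π i = p → π' i = q) (hj : π j ≠ p) (hj' : π' j = q) :
    #{i | π' i ≠ q} < #{i | π i ≠ p} := by
  have hsub : ({i | π' i ≠ q} : Finset ι) ⊆ ({i | π i ≠ p} : Finset ι).erase j := by
    intro i
    simp only [mem_filter, mem_univ, true_and, mem_erase]
    exact fun hi => ⟨fun hij => hi (hij ▸ hj'), fun hip => hi (hcohort i hip)⟩
  calc #{i | π' i ≠ q} ≤ #(({i | π i ≠ p} : Finset ι).erase j) := card_le_card hsub
    _ < #{i | π i ≠ p} := card_erase_lt_of_mem (by simpa using hj)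

theorem reachesEquilibrium_of_symm [Fintype ι]
    (hsym : ∀ (π : ι → P0) (i j : ι), π i = π j → (BR i π ↔ BR j π))
    (hstar : ∃ p : P0, ∀ i, BR i (fun _ => p)) (π : ι → P0) :
    ReachesEquilibrium BR π := by
  classical
  obtain ⟨p, -⟩ := id hstar
  induction hm : #{i | π i ≠ p} using Nat.strong_induction_on generalizing π p with
  | _ m ih =>
  subst hm
  by_cases heq : IsEquilibrium BR π
  · exact heq.reachesEquilibrium
  by_cases hout : ∃ j, π j ≠ p ∧ ¬BR j π
  · obtain ⟨j, hjp, hj⟩ := hout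
    refine ReachesEquilibrium.of_isSatisficingStep (π' := Function.update π j p) ?_ ?_
    · intro i hi
      exact Function.update_of_ne (by rintro rfl; exact hj hi) _ _
    · refine ih _ (card_filter_ne_lt (fun i hi => ?_) hjp (Function.update_self ..)) _ p rfl
      simp [Function.update_apply, hi]
  obtain ⟨j, hj⟩ := not_forall.mp heq
  have hjp : π j = p := by_contra fun hjp => hout ⟨j, hjp, hj⟩
  have hcohort : ∀ i, π i = p → ¬BR i π := fun i hi hbr =>
    hj ((hsym π i j (hi.trans hjp.symm)).mp hbr)
  by_cases hall : ∀ i, π i = p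
  · obtain rfl : π = fun _ => p := funext hall
    exact reachesEquilibrium_const hsym hstar p
  obtain ⟨j₀, hj₀⟩ := not_forall.mp hall
  refine ReachesEquilibrium.of_isSatisficingStep
    (π' := fun i => if π i = p then π j₀ else π i) (fun i hi => if_neg ?_) ?_
  · exact fun hip => hcohort i hip hi
  · exact ih _ (card_filter_ne_lt (fun i hi => if_pos hi) hj₀ (if_neg hj₀)) _ _ rfl

end SatisficingPath

theorem satisficing_paths_from_symmetry_general
    {ι P0 : Type} [Fintype ι]
    (BR : ι → (ι → P0) → Prop)
    (hsym : ∀ (π : ι → P0) (i j : ι), π i = π j → (BR i π ↔ BR j π))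
    (hstar : ∃ p : P0, ∀ i, BR i (fun _ => p)) :
    ∀ π : ι → P0, ∃ (n : ℕ) (path : ℕ → ι → P0),
      path 0 = π ∧ (∀ i, BR i (path n)) ∧
      ∀ k, k < n → ∀ i, BR i (path k) → path (k + 1) i = path k i := by
  exact SatisficingPath.reachesEquilibrium_of_symm hsym hstar

/-- If all `N` players share the same finite policy set, the subjective best-response predicate
is symmetric (players using the same individual policy are simultaneously best-responding or
not), and a symmetric subjective ε-equilibrium exists, then from every joint policy there is a
finite subjective ε-satisficing path terminating at a subjective ε-equilibrium. -/
theorem satisficing_paths_from_symmetry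
    {ι P0 : Type} [Fintype ι] [Nonempty ι] [Fintype P0]
    (BR : ι → (ι → P0) → Prop)
    (hsym : ∀ (π : ι → P0) (i j : ι), π i = π j → (BR i π ↔ BR j π))
    (hstar : ∃ p : P0, ∀ i, BR i (fun _ => p)) :
    ∀ π : ι → P0, ∃ (n : ℕ) (path : ℕ → ι → P0),
      path 0 = π ∧ (∀ i, BR i (path n)) ∧
      ∀ k, k < n → ∀ i, BR i (path k) → path (k + 1) i = path k i :=
  satisficing_paths_from_symmetry_general BR hsym hstar
end

section
/- Mean-field state observability yields an MDP: Let N players have local states in a finite set S and actions in finite U, with local transitions x^i_{t+1} ∼ P_loc(· | x^i_t, μ_t, u^i_t) conditionally independent across players given the global state and joint action, where μ_t is the empirical measure of the global state. Fix player i, suppose all other players use the same stationary policy g ∈ P(U | S × Emp_N) applied to their own observation (x^j_t, μ_t) (mean-field symmetric policies), with actions conditionally independent given the global state. Then the process y^i_t = (x^i_t, μ_t) is a controlled Markov process for player i: for all t, P(y^i_{t+1} = w | y^i_0, u^i_0, …, y^i_t, u^i_t) = P(y^i_{t+1} = w | y^i_t, u^i_t), and this conditional law does not depend on player i's own policy or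 the initial distribution. -/
open Classical

noncomputable section

/-- The empirical measure (as a probability vector) of a global state `s ∈ S^N`. -/
def empDist {S : Type} [DecidableEq S] {N : ℕ} (s : Fin N → S) : S → ℝ :=
  fun x => ((Finset.univ.filter fun j : Fin N => s j = x).card : ℝ) / (N : ℝ)

variable {S U : Type} [Fintype S] [Fintype U] [DecidableEq S] [DecidableEq U] {N : ℕ}

/-- Probability of joint action `a` at global state `s` when player `i` uses the stationary
policy `πi` on its observation `(s^i, μ(s))` and every other player uses the common stationary
policy `g` on its own observation, with actions conditionally independent given the state. -/
def jointActProb (i : Fin N) (πi g : S → (S → ℝ) → U → ℝ)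
    (s : Fin N → S) (a : Fin N → U) : ℝ :=
  ∏ j : Fin N, if j = i then πi (s i) (empDist s) (a i) else g (s j) (empDist s) (a j)

/-- Product-form global transition probability with local kernel `Ploc` and empirical-measure
coupling: local state transitions are conditionally independent given the state and actions. -/
def transProb (Ploc : S → (S → ℝ) → U → S → ℝ)
    (s : Fin N → S) (a : Fin N → U) (s' : Fin N → S) : ℝ :=
  ∏ j : Fin N, Ploc (s j) (empDist s) (a j) (s' j)

/-- Probability that player `i` observes the local-observation history
`(y_0, u_0, …, y_t, u_t)` (where `y_k = (x^i_k, μ_k)`), obtained by summing the probabilities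
of all global trajectories consistent with it. -/
def histProb (ν : (Fin N → S) → ℝ) (πi g : S → (S → ℝ) → U → ℝ)
    (Ploc : S → (S → ℝ) → U → S → ℝ) (i : Fin N) (t : ℕ)
    (ys : Fin (t + 1) → S × (S → ℝ)) (us : Fin (t + 1) → U) : ℝ :=
  ∑ xs : Fin (t + 1) → (Fin N → S), ∑ as : Fin (t + 1) → (Fin N → U),
    if (∀ k : Fin (t + 1), ((xs k) i, empDist (xs k)) = ys k ∧ (as k) i = us k) then
      ν (xs 0) * (∏ k : Fin (t + 1), jointActProb i πi g (xs k) (as k))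
        * ∏ k : Fin t, transProb Ploc (xs k.castSucc) (as k.castSucc) (xs k.succ)
    else 0

/-- Probability that player `i` observes the history `(y_0, u_0, …, y_t, u_t)` and then the
next observation `y_{t+1} = w`. -/
def histNextProb (ν : (Fin N → S) → ℝ) (πi g : S → (S → ℝ) → U → ℝ)
    (Ploc : S → (S → ℝ) → U → S → ℝ) (i : Fin N) (t : ℕ)
    (ys : Fin (t + 1) → S × (S → ℝ)) (us : Fin (t + 1) → U) (w : S × (S → ℝ)) : ℝ :=
  ∑ xs : Fin (t + 2) → (Fin N → S), ∑ as : Fin (t + 1) → (Fin N → U),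
    if (∀ k : Fin (t + 1), ((xs k.castSucc) i, empDist (xs k.castSucc)) = ys k
          ∧ (as k) i = us k)
        ∧ ((xs (Fin.last (t + 1))) i, empDist (xs (Fin.last (t + 1)))) = w then
      ν (xs 0) * (∏ k : Fin (t + 1), jointActProb i πi g (xs k.castSucc) (as k))
        * ∏ k : Fin (t + 1), transProb Ploc (xs k.castSucc) (as k) (xs k.succ)
    else 0

/-!
Fix the global state `s` and player `i`'s action `u`. The law `nextObsProb` of player `i`'s next
observation `(x^i, μ)` is invariant under permutations of the players that fix `i`, because the
transition law is a product over players and the other players all use the same policy `g`. Two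
global states with the same observation `(s i, empDist s)` differ by such a permutation, so this
law is a kernel `obsKernel` on observations. Splitting a trajectory at its last action and next
state, and summing out the other players' last actions (`g` is a probability vector), the
probability of a history followed by the observation `w` is `obsKernel (y_t, u_t) w` times the
probability of the history, whatever the initial law and player `i`'s own policy.
-/

open Finset

lemma exists_perm_comp_eq_of_card_fiber_eq {α β : Type*} [Fintype α] [DecidableEq β]
    {f g : α → β}
    (h : ∀ b, (univ.filter fun a => f a = b).card = (univ.filter fun a => g a = b).card) :
    ∃ π : Equiv.Perm α, f ∘ π = g := by
  refine ⟨Equiv.ofFiberEquiv fun b => Fintype.equivOfCardEq ?_,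
    funext (Equiv.ofFiberEquiv_map _)⟩
  rw [Fintype.card_subtype, Fintype.card_subtype, h]

lemma sum_comp_perm_pi {ι X M : Type*} [Fintype ι] [DecidableEq ι] [Fintype X]
    [AddCommMonoid M] (π : Equiv.Perm ι) (F : (ι → X) → M) :
    ∑ x, F (x ∘ π) = ∑ x, F x :=
  (Equiv.arrowCongr π.symm (Equiv.refl X)).sum_comp F

lemma sum_pi_fin_succ {n : ℕ} {X M : Type*} [Fintype X] [AddCommMonoid M]
    (F : (Fin (n + 1) → X) → M) :
    ∑ x, F x = ∑ x₀ : Fin n → X, ∑ x, F (Fin.snoc x₀ x) := by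
  rw [← (Fin.snocEquiv fun _ => X).sum_comp, Fintype.sum_prod_type, sum_comm]
  rfl

omit [Fintype S] in
lemma empDist_comp_perm (s : Fin N → S) (π : Equiv.Perm (Fin N)) :
    empDist (s ∘ π) = empDist s := by
  funext x
  simp only [empDist, card_filter, Function.comp_apply]
  rw [Equiv.sum_comp π fun j => if s j = x then 1 else 0]

omit [Fintype S] in
lemma card_filter_eq_of_empDist_eq {s σ : Fin N → S} (h : empDist s = empDist σ) (x : S) :
    (univ.filter fun j => s j = x).card = (univ.filter fun j => σ j = x).card := by
  rcases N.eq_zero_or_pos with rfl | hN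
  · simp
  · have hx := congrFun h x
    rw [empDist, empDist, div_left_inj' (by positivity)] at hx
    exact_mod_cast hx

omit [Fintype S] in
lemma exists_perm_fixing_of_empDist_eq {i : Fin N} {s σ : Fin N → S} (hi : s i = σ i)
    (hμ : empDist s = empDist σ) : ∃ π : Equiv.Perm (Fin N), π i = i ∧ s ∘ π = σ := by
  obtain ⟨π, hπ⟩ := exists_perm_comp_eq_of_card_fiber_eq (card_filter_eq_of_empDist_eq hμ)
  -- `π` need not fix `i`, but `s` agrees at `i` and `π i`, so the transposition repairs it.
  have hsame : s (π i) = s i := (congrFun hπ i).trans hi.symm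
  have hswap : s ∘ Equiv.swap i (π i) = s := by
    funext j
    simp only [Function.comp_apply, Equiv.swap_apply_def]
    split_ifs with h₁ h₂
    · rw [h₁, hsame]
    · rw [h₂, hsame]
    · rfl
  refine ⟨Equiv.swap i (π i) * π, by simp, ?_⟩
  rw [Equiv.Perm.coe_mul, ← Function.comp_assoc, hswap, hπ]

omit [Fintype S] [Fintype U] [DecidableEq U] in
lemma transProb_comp_perm (Ploc : S → (S → ℝ) → U → S → ℝ) (π : Equiv.Perm (Fin N))
    (s : Fin N → S) (a : Fin N → U) (s' : Fin N → S) :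
    transProb Ploc (s ∘ π) (a ∘ π) (s' ∘ π) = transProb Ploc s a s' := by
  simp only [transProb, empDist_comp_perm, Function.comp_apply]
  exact Equiv.prod_comp π fun j => Ploc (s j) (empDist s) (a j) (s' j)

omit [Fintype S] [Fintype U] [DecidableEq U] in
lemma jointActProb_comp_perm {i : Fin N} {π : Equiv.Perm (Fin N)} (hπ : π i = i)
    (πi g : S → (S → ℝ) → U → ℝ) (s : Fin N → S) (a : Fin N → U) :
    jointActProb i πi g (s ∘ π) (a ∘ π) = jointActProb i πi g s a := by
  simp only [jointActProb, empDist_comp_perm, Function.comp_apply, hπ]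
  conv_rhs => rw [← Equiv.prod_comp π]
  refine prod_congr rfl fun j _ => ?_
  simp only [π.injective.eq_iff' hπ]

def obsTransProb (Ploc : S → (S → ℝ) → U → S → ℝ) (i : Fin N) (s : Fin N → S)
    (a : Fin N → U) (w : S × (S → ℝ)) : ℝ :=
  ∑ s' : Fin N → S, if (s' i, empDist s') = w then transProb Ploc s a s' else 0

/-- Giving player `i` the constant policy `1` turns `jointActProb` into the law of the other
players' actions. -/
def nextObsProb (g : S → (S → ℝ) → U → ℝ) (Ploc : S → (S → ℝ) → U → S → ℝ) (i : Fin N)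
    (s : Fin N → S) (u : U) (w : S × (S → ℝ)) : ℝ :=
  ∑ a : Fin N → U,
    if a i = u then jointActProb i (fun _ _ _ => 1) g s a * obsTransProb Ploc i s a w else 0

section Invariance

variable {Ploc : S → (S → ℝ) → U → S → ℝ} {g : S → (S → ℝ) → U → ℝ} {i : Fin N}
  {π : Equiv.Perm (Fin N)}

omit [Fintype U] [DecidableEq U] in
lemma obsTransProb_comp_perm (hπ : π i = i) (s : Fin N → S) (a : Fin N → U)
    (w : S × (S → ℝ)) :
    obsTransProb Ploc i (s ∘ π) (a ∘ π) w = obsTransProb Ploc i s a w := by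
  rw [obsTransProb, ← sum_comp_perm_pi π]
  simp only [transProb_comp_perm, empDist_comp_perm, Function.comp_apply, hπ]
  rfl

lemma nextObsProb_comp_perm (hπ : π i = i) (s : Fin N → S) (u : U) (w : S × (S → ℝ)) :
    nextObsProb g Ploc i (s ∘ π) u w = nextObsProb g Ploc i s u w := by
  rw [nextObsProb, ← sum_comp_perm_pi π]
  simp only [jointActProb_comp_perm hπ, obsTransProb_comp_perm hπ, Function.comp_apply, hπ]
  rfl

lemma nextObsProb_eq_of_obs_eq {s σ : Fin N → S} (h : (s i, empDist s) = (σ i, empDist σ))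
    (u : U) (w : S × (S → ℝ)) :
    nextObsProb g Ploc i s u w = nextObsProb g Ploc i σ u w := by
  obtain ⟨hi, hμ⟩ := Prod.mk.inj h
  obtain ⟨π, hπ, rfl⟩ := exists_perm_fixing_of_empDist_eq hi hμ
  exact (nextObsProb_comp_perm hπ s u w).symm

end Invariance

/-- `nextObsProb` at an arbitrary global state with observation `y` (and `0` if there is none);
`obsKernel_obs` shows the choice does not matter. -/
def obsKernel (g : S → (S → ℝ) → U → ℝ) (Ploc : S → (S → ℝ) → U → S → ℝ) (i : Fin N)
    (y : S × (S → ℝ)) (u : U) (w : S × (S → ℝ)) : ℝ :=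
  if h : ∃ s : Fin N → S, (s i, empDist s) = y then nextObsProb g Ploc i h.choose u w else 0

lemma obsKernel_obs (g : S → (S → ℝ) → U → ℝ) (Ploc : S → (S → ℝ) → U → S → ℝ) (i : Fin N)
    (s : Fin N → S) (u : U) (w : S × (S → ℝ)) :
    obsKernel g Ploc i (s i, empDist s) u w = nextObsProb g Ploc i s u w := by
  have h : ∃ σ : Fin N → S, (σ i, empDist σ) = (s i, empDist s) := ⟨s, rfl⟩
  rw [obsKernel, dif_pos h]
  exact nextObsProb_eq_of_obs_eq h.choose_spec u w

section OneStep

variable {g : S → (S → ℝ) → U → ℝ} {i : Fin N}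

omit [Fintype S] [Fintype U] [DecidableEq U] in
lemma jointActProb_eq_mul (πi : S → (S → ℝ) → U → ℝ) (s : Fin N → S) (a : Fin N → U) :
    jointActProb i πi g s a
      = πi (s i) (empDist s) (a i) * jointActProb i (fun _ _ _ => 1) g s a := by
  simp only [jointActProb]
  rw [Fintype.prod_eq_mul_prod_compl i, Fintype.prod_eq_mul_prod_compl i, if_pos rfl,
    if_pos rfl, one_mul]
  congr 1
  refine prod_congr rfl fun j hj => ?_
  have hji : j ≠ i := by simpa using hj
  rw [if_neg hji, if_neg hji]

omit [Fintype S] in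
lemma sum_jointActProb_mul (πi : S → (S → ℝ) → U → ℝ) (s : Fin N → S) (u : U)
    (F : (Fin N → U) → ℝ) :
    ∑ a, (if a i = u then jointActProb i πi g s a * F a else 0)
      = πi (s i) (empDist s) u
          * ∑ a, if a i = u then jointActProb i (fun _ _ _ => 1) g s a * F a else 0 := by
  rw [mul_sum]
  refine sum_congr rfl fun a _ => ?_
  split_ifs with ha
  · rw [jointActProb_eq_mul, ha, mul_assoc]
  · rw [mul_zero]

omit [Fintype S] in
lemma sum_jointActProb_of_apply_eq (hg : ∀ x μ, ∑ a, g x μ a = 1) (πi : S → (S → ℝ) → U → ℝ)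
    (s : Fin N → S) (u : U) :
    ∑ a, (if a i = u then jointActProb i πi g s a else 0) = πi (s i) (empDist s) u := by
  set f : Fin N → U → ℝ := fun j b =>
    if j = i then (if b = u then πi (s i) (empDist s) b else 0) else g (s j) (empDist s) b
  have hfactor : ∀ a : Fin N → U,
      (if a i = u then jointActProb i πi g s a else 0) = ∏ j, f j (a j) := by
    intro a
    by_cases ha : a i = u
    · rw [if_pos ha, jointActProb]
      refine prod_congr rfl fun j _ => ?_
      split_ifs with hj <;> simp_all [f]
    · rw [if_neg ha, eq_comm]
      exact prod_eq_zero (mem_univ i) (by simp [f, ha])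
  rw [sum_congr rfl fun a _ => hfactor a, ← Fintype.prod_sum, Fintype.prod_eq_mul_prod_compl i]
  have hothers : ∀ j ∈ ({i}ᶜ : Finset (Fin N)), ∑ b, f j b = 1 := fun j hj => by
    simp only [f, if_neg (by simpa using hj : j ≠ i), hg]
  rw [prod_eq_one hothers, mul_one]
  simp [f]

end OneStep

def weightedHistProb (ν : (Fin N → S) → ℝ) (πi g : S → (S → ℝ) → U → ℝ)
    (Ploc : S → (S → ℝ) → U → S → ℝ) (i : Fin N) (t : ℕ)
    (ys : Fin (t + 1) → S × (S → ℝ)) (us : Fin (t + 1) → U)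
    (R : (Fin N → S) → (Fin N → U) → ℝ) : ℝ :=
  ∑ xs : Fin (t + 1) → (Fin N → S), ∑ as : Fin (t + 1) → (Fin N → U),
    if (∀ k : Fin (t + 1), ((xs k) i, empDist (xs k)) = ys k ∧ (as k) i = us k) then
      ν (xs 0) * (∏ k : Fin (t + 1), jointActProb i πi g (xs k) (as k))
        * (∏ k : Fin t, transProb Ploc (xs k.castSucc) (as k.castSucc) (xs k.succ))
        * R (xs (Fin.last t)) (as (Fin.last t))
    else 0

section History

variable (ν : (Fin N → S) → ℝ) (πi g : S → (S → ℝ) → U → ℝ)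
  (Ploc : S → (S → ℝ) → U → S → ℝ) (i : Fin N) (t : ℕ)
  (ys : Fin (t + 1) → S × (S → ℝ)) (us : Fin (t + 1) → U)

lemma weightedHistProb_one :
    weightedHistProb ν πi g Ploc i t ys us (fun _ _ => 1) = histProb ν πi g Ploc i t ys us := by
  simp only [weightedHistProb, histProb, mul_one]

lemma histNextProb_eq_weightedHistProb (w : S × (S → ℝ)) :
    histNextProb ν πi g Ploc i t ys us w
      = weightedHistProb ν πi g Ploc i t ys us fun s a => obsTransProb Ploc i s a w := by
  rw [histNextProb, sum_pi_fin_succ, weightedHistProb]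
  refine sum_congr rfl fun xs _ => ?_
  rw [sum_comm]
  refine sum_congr rfl fun as _ => ?_
  simp only [Fin.snoc_castSucc, Fin.snoc_last]
  have hstart : ∀ s' : Fin N → S, (Fin.snoc xs s' : Fin (t + 2) → Fin N → S) 0 = xs 0 := fun s' =>
    Fin.snoc_castSucc (i := 0) ..
  have htrans : ∀ s' : Fin N → S, ∏ k : Fin (t + 1),
      transProb Ploc (xs k) (as k) ((Fin.snoc xs s' : Fin (t + 2) → Fin N → S) k.succ)
      = (∏ k : Fin t, transProb Ploc (xs k.castSucc) (as k.castSucc) (xs k.succ))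
        * transProb Ploc (xs (Fin.last t)) (as (Fin.last t)) s' := by
    intro s'
    rw [Fin.prod_univ_castSucc]
    simp only [← Fin.castSucc_succ, Fin.snoc_castSucc, Fin.succ_last, Fin.snoc_last]
  simp only [hstart, htrans]
  split_ifs with hC
  · rw [obsTransProb, mul_sum]
    refine sum_congr rfl fun s' _ => ?_
    rw [if_congr (and_iff_right hC) rfl rfl]
    split_ifs <;> ring
  · simp [hC]

lemma weightedHistProb_eq_sum_lastAction (R : (Fin N → S) → (Fin N → U) → ℝ) :
    weightedHistProb ν πi g Ploc i t ys us R =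
      ∑ xs : Fin (t + 1) → (Fin N → S), ∑ as : Fin t → (Fin N → U),
        (if (∀ k, ((xs k) i, empDist (xs k)) = ys k) ∧ ∀ k : Fin t, as k i = us k.castSucc then
          ν (xs 0) * (∏ k : Fin t, jointActProb i πi g (xs k.castSucc) (as k))
            * ∏ k : Fin t, transProb Ploc (xs k.castSucc) (as k) (xs k.succ)
        else 0)
        * ∑ a, if a i = us (Fin.last t) then
            jointActProb i πi g (xs (Fin.last t)) a * R (xs (Fin.last t)) a else 0 := by
  rw [weightedHistProb]
  refine sum_congr rfl fun xs _ => ?_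
  rw [sum_pi_fin_succ]
  refine sum_congr rfl fun as _ => ?_
  rw [mul_sum]
  refine sum_congr rfl fun a _ => ?_
  set as' : Fin (t + 1) → Fin N → U := Fin.snoc as a
  have hcond : (∀ k, ((xs k) i, empDist (xs k)) = ys k ∧ as' k i = us k)
      ↔ ((∀ k, ((xs k) i, empDist (xs k)) = ys k) ∧ ∀ k : Fin t, as k i = us k.castSucc)
        ∧ a i = us (Fin.last t) := by
    simp only [forall_and, Fin.forall_fin_succ' (P := fun k => as' k i = us k), as',
      Fin.snoc_castSucc, Fin.snoc_last, and_assoc]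
  rw [if_congr hcond rfl rfl, Fin.prod_univ_castSucc]
  simp only [as', Fin.snoc_castSucc, Fin.snoc_last]
  rw [ite_and]
  split_ifs <;> ring

lemma weightedHistProb_eq_mul_histProb (R : (Fin N → S) → (Fin N → U) → ℝ) (c : ℝ)
    (h : ∀ s : Fin N → S, (s i, empDist s) = ys (Fin.last t) →
      ∑ a, (if a i = us (Fin.last t) then jointActProb i πi g s a * R s a else 0)
        = c * ∑ a, if a i = us (Fin.last t) then jointActProb i πi g s a else 0) :
    weightedHistProb ν πi g Ploc i t ys us R = c * histProb ν πi g Ploc i t ys us := by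
  rw [← weightedHistProb_one, weightedHistProb_eq_sum_lastAction,
    weightedHistProb_eq_sum_lastAction, mul_sum]
  refine sum_congr rfl fun xs _ => ?_
  rw [mul_sum]
  refine sum_congr rfl fun as _ => ?_
  split_ifs with hprefix
  · simp only [mul_one]
    rw [h _ (hprefix.1 _)]
    ring
  · simp

lemma histNextProb_eq_obsKernel_mul (hg : ∀ x μ, ∑ a, g x μ a = 1) (w : S × (S → ℝ)) :
    histNextProb ν πi g Ploc i t ys us w
      = obsKernel g Ploc i (ys (Fin.last t)) (us (Fin.last t)) w
          * histProb ν πi g Ploc i t ys us := by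
  rw [histNextProb_eq_weightedHistProb]
  refine weightedHistProb_eq_mul_histProb ν πi g Ploc i t ys us _ _ fun s hs => ?_
  rw [sum_jointActProb_mul, sum_jointActProb_of_apply_eq hg, ← hs, obsKernel_obs, nextObsProb]
  ring

end History

/-- The Markov property in cross-multiplied form, which stays meaningful for null histories. -/
theorem mean_field_observation_is_controlled_markov_general
    (Ploc : S → (S → ℝ) → U → S → ℝ)
    (g : S → (S → ℝ) → U → ℝ)
    (hg : ∀ x μ, (∀ a, 0 ≤ g x μ a) ∧ ∑ a : U, g x μ a = 1)
    (i : Fin N)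
    (ν ν' : (Fin N → S) → ℝ)
    (πi πi' : S → (S → ℝ) → U → ℝ)
    (t t' : ℕ)
    (ys : Fin (t + 1) → S × (S → ℝ)) (us : Fin (t + 1) → U)
    (ys' : Fin (t' + 1) → S × (S → ℝ)) (us' : Fin (t' + 1) → U)
    (hy : ys (Fin.last t) = ys' (Fin.last t'))
    (hu : us (Fin.last t) = us' (Fin.last t'))
    (w : S × (S → ℝ)) :
    histNextProb ν πi g Ploc i t ys us w * histProb ν' πi' g Ploc i t' ys' us'
      = histNextProb ν' πi' g Ploc i t' ys' us' w * histProb ν πi g Ploc i t ys us := by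
  have hg_sum : ∀ x μ, ∑ a, g x μ a = 1 := fun x μ => (hg x μ).2
  rw [histNextProb_eq_obsKernel_mul ν πi g Ploc i t ys us hg_sum,
    histNextProb_eq_obsKernel_mul ν' πi' g Ploc i t' ys' us' hg_sum, hy, hu]
  ring

/-- Mean-field state observability yields a controlled Markov process for player `i`: when all
other players use the same stationary policy `g` on their observations `(x^j_t, μ_t)`, the
conditional law of the next observation `y^i_{t+1} = (x^i_{t+1}, μ_{t+1})` given the observable
history depends only on the current `(y^i_t, u^i_t)`, and does not depend on player `i`'s own
stationary policy, on the initial distribution, on the time index, nor on the earlier history.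
This is expressed in cross-multiplied form, valid also for null histories. -/
theorem mean_field_observation_is_controlled_markov
    (Ploc : S → (S → ℝ) → U → S → ℝ)
    (hPloc : ∀ x μ a, (∀ x', 0 ≤ Ploc x μ a x') ∧ ∑ x' : S, Ploc x μ a x' = 1)
    (g : S → (S → ℝ) → U → ℝ)
    (hg : ∀ x μ, (∀ a, 0 ≤ g x μ a) ∧ ∑ a : U, g x μ a = 1)
    (i : Fin N)
    (ν ν' : (Fin N → S) → ℝ)
    (hν : (∀ s, 0 ≤ ν s) ∧ ∑ s : Fin N → S, ν s = 1)
    (hν' : (∀ s, 0 ≤ ν' s) ∧ ∑ s : Fin N → S, ν' s = 1)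
    (πi πi' : S → (S → ℝ) → U → ℝ)
    (hπi : ∀ x μ, (∀ a, 0 ≤ πi x μ a) ∧ ∑ a : U, πi x μ a = 1)
    (hπi' : ∀ x μ, (∀ a, 0 ≤ πi' x μ a) ∧ ∑ a : U, πi' x μ a = 1)
    (t t' : ℕ)
    (ys : Fin (t + 1) → S × (S → ℝ)) (us : Fin (t + 1) → U)
    (ys' : Fin (t' + 1) → S × (S → ℝ)) (us' : Fin (t' + 1) → U)
    (hy : ys (Fin.last t) = ys' (Fin.last t'))
    (hu : us (Fin.last t) = us' (Fin.last t'))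
    (w : S × (S → ℝ)) :
    histNextProb ν πi g Ploc i t ys us w * histProb ν' πi' g Ploc i t' ys' us'
      = histNextProb ν' πi' g Ploc i t' ys' us' w * histProb ν πi g Ploc i t ys us :=
  mean_field_observation_is_controlled_markov_general Ploc g hg i ν ν' πi πi' t t' ys us ys' us' hy
    hu w

end
end

section
/- Tolerance-gap correctness: Let ε > 0, let V : Y → ℝ and W : Y × U → ℝ on finite sets Y, U, and define the gap set S = { |ε − (V(y) − min_a W(y,a))| : y ∈ Y } and d̄ = min(S \ {0}) (assume S \ {0} nonempty). Let d ∈ (0, d̄) and Ξ = (1/2)·min{d, d̄ − d}. If V̂ : Y → ℝ and Ŵ : Y × U → ℝ satisfy ‖V̂ − V‖_∞ < Ξ and ‖Ŵ − W‖_∞ < Ξ, then: [∀ y, V(y) ≤ min_a W(y,a) + ε] holds if and only if [∀ y, V̂(y) ≤ min_a Ŵ(y,a) + ε + d] holds. -/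
/-!
Write `e(y) = V(y) − (min_a W(y,a) + ε)` for the true excess and `ê(y)` for the estimated one.
Since `min` is 1-Lipschitz in sup norm, `|ê(y) − e(y)| < 2Ξ = min{d, d̄ − d}`. If `e(y) ≤ 0` this
gives `ê(y) < d`; conversely `ê(y) ≤ d` forces `e(y) < d̄`, and as every nonzero `|e(y)|` lies in
the gap set, whose least element is `d̄`, this rules out `e(y) > 0`.
-/

open Set

theorem abs_ciInf_sub_ciInf_le {α ι : Type*} [ConditionallyCompleteLinearOrder α] [AddCommGroup α]
    [IsOrderedAddMonoid α] [Nonempty ι] {f g : ι → α} (hf : BddBelow (range f))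
    (hg : BddBelow (range g)) {c : α} (h : ∀ i, |f i - g i| ≤ c) :
    |(⨅ i, f i) - ⨅ i, g i| ≤ c := by
  refine abs_sub_le_iff.2 ⟨?_, ?_⟩
  · refine sub_le_iff_le_add'.2 (le_ciInf_add fun i => (ciInf_le hf i).trans ?_)
    exact sub_le_iff_le_add'.1 (le_of_abs_le (h i))
  · refine sub_le_iff_le_add'.2 (le_ciInf_add fun i => (ciInf_le hg i).trans ?_)
    exact sub_le_iff_le_add'.1 (le_of_abs_le (abs_sub_comm (f i) (g i) ▸ h i))

theorem le_iff_le_add_of_gap {a b a' b' d dbar : ℝ} (hgap : a ≠ b → dbar ≤ |a - b|)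
    (hclose : |(a' - b') - (a - b)| < min d (dbar - d)) : a ≤ b ↔ a' ≤ b' + d := by
  obtain ⟨hlo, hhi⟩ := abs_lt.1 hclose
  have hd := min_le_left d (dbar - d)
  have hdbar := min_le_right d (dbar - d)
  refine ⟨fun h => by linarith, fun h => ?_⟩
  by_contra! hba
  have hgap := hgap hba.ne'
  rw [abs_of_pos (sub_pos.2 hba)] at hgap
  linarith

theorem tolerance_gap_correctness_general
    {Y U : Type} [Fintype Y] [Fintype U] [Nonempty U]
    (ε : ℝ)
    (V : Y → ℝ) (W : Y → U → ℝ) (Vh : Y → ℝ) (Wh : Y → U → ℝ)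
    (Sgap : Finset ℝ)
    (hS : Sgap = Finset.image (fun y => |ε - (V y - ⨅ a : U, W y a)|) Finset.univ)
    (hne : (Sgap.erase 0).Nonempty)
    (dbar : ℝ) (hdbar : dbar = (Sgap.erase 0).min' hne)
    (d : ℝ)
    (Ξ : ℝ) (hΞ : Ξ = min d (dbar - d) / 2)
    (hV : ∀ y, |Vh y - V y| < Ξ)
    (hW : ∀ y a, |Wh y a - W y a| < Ξ) :
    (∀ y, V y ≤ (⨅ a : U, W y a) + ε) ↔ (∀ y, Vh y ≤ (⨅ a : U, Wh y a) + ε + d) := by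
  refine forall_congr' fun y => le_iff_le_add_of_gap (dbar := dbar) ?_ ?_
  · intro hne0
    have hmem : |ε - (V y - ⨅ a, W y a)| ∈ Sgap.erase 0 := by
      refine Finset.mem_erase.2 ⟨fun h0 => hne0 ?_, ?_⟩
      · linarith [abs_eq_zero.1 h0]
      · exact hS ▸ Finset.mem_image_of_mem _ (Finset.mem_univ y)
    rw [abs_sub_comm, hdbar, add_comm, ← sub_sub_eq_add_sub]
    exact Finset.min'_le _ _ hmem
  · have hinf : |(⨅ a, Wh y a) - ⨅ a, W y a| ≤ Ξ :=
      abs_ciInf_sub_ciInf_le (finite_range _).bddBelow (finite_range _).bddBelow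
        fun a => (hW y a).le
    calc |(Vh y - ((⨅ a, Wh y a) + ε)) - (V y - ((⨅ a, W y a) + ε))|
        = |(Vh y - V y) - ((⨅ a, Wh y a) - ⨅ a, W y a)| := by ring_nf
      _ ≤ |Vh y - V y| + |(⨅ a, Wh y a) - ⨅ a, W y a| := abs_sub _ _
      _ < min d (dbar - d) := by linarith [hV y]

/-- Tolerance-gap correctness: if the tolerance `d` lies strictly between `0` and the minimum
nonzero separation `d̄` between `ε` and the suboptimality gaps `V(y) − min_a W(y,a)`, and the
estimates `V̂`, `Ŵ` are within `Ξ = (1/2)·min{d, d̄ − d}` of `V`, `W` in sup norm, then the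
true ε-best-responding condition holds iff the estimated condition with slack `ε + d` holds. -/
theorem tolerance_gap_correctness
    {Y U : Type} [Fintype Y] [Fintype U] [Nonempty Y] [Nonempty U]
    (ε : ℝ) (hε : 0 < ε)
    (V : Y → ℝ) (W : Y → U → ℝ) (Vh : Y → ℝ) (Wh : Y → U → ℝ)
    (Sgap : Finset ℝ)
    (hS : Sgap = Finset.image (fun y => |ε - (V y - ⨅ a : U, W y a)|) Finset.univ)
    (hne : (Sgap.erase 0).Nonempty)
    (dbar : ℝ) (hdbar : dbar = (Sgap.erase 0).min' hne)
    (d : ℝ) (hd : 0 < d ∧ d < dbar)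
    (Ξ : ℝ) (hΞ : Ξ = min d (dbar - d) / 2)
    (hV : ∀ y, |Vh y - V y| < Ξ)
    (hW : ∀ y a, |Wh y a - W y a| < Ξ) :
    (∀ y, V y ≤ (⨅ a : U, W y a) + ε) ↔ (∀ y, Vh y ≤ (⨅ a : U, Wh y a) + ε + d) :=
  tolerance_gap_correctness_general ε V W Vh Wh Sgap hS hne dbar hdbar d Ξ hΞ hV hW
end
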